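/- Let θ be an invertible antisymmetric real 4×4 matrix, g a symmetric positive definite real 4×4 matrix, e^σ := √(det θ · det g), and G := e^{−σ} θ g θᵀ. Then the matrix identity G g G = (1/2)·tr(G g)·G − g⁻¹ holds, where all products are matrix products. (This is the 4-dimensional identity (G g G)^{μν} = (1/2)(G g) G^{μν} − g^{μν}.) -/

import Mathlib

/-!
Write `g = Bᵀ B` with `B` invertible. Then `A := B θ Bᵀ` is antisymmetric, with
`A² = -B N Bᵀ` for `N := θ g θᵀ`, `tr A² = -tr (N g)` and `det A = det θ · det g`.
An antisymmetric `4 × 4` matrix has even characteristic polynomial, so Cayley–Hamilton reads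
`A⁴ = (tr A² / 2) A² - det A`. Stripping off `B` and `Bᵀ` turns this into
`N g N = (tr (N g) / 2) N - det θ · det g · g⁻¹`, and `G = e^{-σ} N` with
`e^{2σ} = det θ · det g` gives the claim; `e^σ ≠ 0` because `det θ` is the square of the
nonzero Pfaffian.
-/

namespace Matrix

section Antisymmetric

variable {K : Type*} [Field K]

theorem exists_eq_of_transpose_eq_neg_fin_four [CharZero K] {A : Matrix (Fin 4) (Fin 4) K}
    (hA : Aᵀ = -A) :
    ∃ a b c d e f : K, A = !![0, a, b, c; -a, 0, d, e; -b, -d, 0, f; -c, -e, -f, 0] := by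
  have hswap (i j : Fin 4) : A j i = -A i j := by simpa using congrFun₂ hA i j
  have hdiag (i : Fin 4) : A i i = 0 := CharZero.eq_neg_self_iff.mp (hswap i i)
  refine ⟨A 0 1, A 0 2, A 0 3, A 1 2, A 1 3, A 2 3, ?_⟩
  ext i j
  fin_cases i <;> fin_cases j <;> first | exact hdiag _ | exact hswap _ _ | rfl

def pfaffianFinFour (A : Matrix (Fin 4) (Fin 4) K) : K :=
  A 0 1 * A 2 3 - A 0 2 * A 1 3 + A 0 3 * A 1 2

theorem det_eq_pfaffianFinFour_sq [CharZero K] {A : Matrix (Fin 4) (Fin 4) K} (hA : Aᵀ = -A) :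
    A.det = pfaffianFinFour A ^ 2 := by
  obtain ⟨a, b, c, d, e, f, rfl⟩ := exists_eq_of_transpose_eq_neg_fin_four hA
  simp [pfaffianFinFour, det_succ_row_zero, Fin.sum_univ_succ, Fin.succAbove]
  ring

theorem det_pos_of_transpose_eq_neg_fin_four [LinearOrder K] [IsStrictOrderedRing K]
    {A : Matrix (Fin 4) (Fin 4) K} (hA : Aᵀ = -A) (hAu : IsUnit A) : 0 < A.det := by
  have hdet : A.det ≠ 0 := ((isUnit_iff_isUnit_det A).mp hAu).ne_zero
  rw [det_eq_pfaffianFinFour_sq hA] at hdet ⊢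
  exact (sq_nonneg _).lt_of_ne' hdet

theorem cayley_hamilton_of_transpose_eq_neg_fin_four [CharZero K]
    {A : Matrix (Fin 4) (Fin 4) K} (hA : Aᵀ = -A) :
    A * A * (A * A) = ((A * A).trace / 2) • (A * A) - A.det • 1 := by
  rw [det_eq_pfaffianFinFour_sq hA]
  obtain ⟨a, b, c, d, e, f, rfl⟩ := exists_eq_of_transpose_eq_neg_fin_four hA
  ext i j
  fin_cases i <;> fin_cases j <;>
    simp [pfaffianFinFour, mul_apply, Fin.sum_univ_four, trace] <;> ring

theorem cayley_hamilton_mul_mul_transpose_fin_four [CharZero K]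
    {θ g B : Matrix (Fin 4) (Fin 4) K} (hθ : θᵀ = -θ) (hB : IsUnit B) (hgB : Bᵀ * B = g) :
    θ * g * θᵀ * g * (θ * g * θᵀ) =
      ((θ * g * θᵀ * g).trace / 2) • (θ * g * θᵀ) - (θ.det * g.det) • g⁻¹ := by
  set N := θ * g * θᵀ
  set A := B * θ * Bᵀ
  have hBt : IsUnit Bᵀ := (isUnit_transpose B).mpr hB
  have hA : Aᵀ = -A := by simp [A, hθ, Matrix.mul_assoc]
  have hAA : A * A = -(B * N * Bᵀ) := by simp [A, N, hθ, ← hgB, Matrix.mul_assoc]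
  have hdetA : A.det = θ.det * g.det := by
    simp only [A, ← hgB, det_mul, det_transpose]; ring
  have hinv : B * g⁻¹ * Bᵀ = 1 := by
    rw [← hgB, Matrix.mul_inv_rev, ← Matrix.mul_assoc,
      mul_nonsing_inv _ ((isUnit_iff_isUnit_det B).mp hB), Matrix.one_mul,
      nonsing_inv_mul _ ((isUnit_iff_isUnit_det _).mp hBt)]
  have htr : (B * N * Bᵀ).trace = (N * g).trace := by
    rw [trace_mul_cycle, hgB, trace_mul_comm]
  have hsq : B * N * Bᵀ * (B * N * Bᵀ) = B * (N * g * N) * Bᵀ := by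
    simp only [← hgB, Matrix.mul_assoc]
  have hCH := cayley_hamilton_of_transpose_eq_neg_fin_four hA
  rw [hAA, neg_mul_neg, hsq, hdetA, trace_neg, htr, neg_div, neg_smul_neg, ← hinv] at hCH
  refine hB.mul_left_cancel (hBt.mul_right_cancel ?_)
  rw [hCH, Matrix.mul_sub, Matrix.sub_mul, Matrix.mul_smul, Matrix.smul_mul, Matrix.mul_smul,
    Matrix.smul_mul]

end Antisymmetric

theorem exists_isUnit_transpose_mul_self_eq_of_posDef {n : Type*} [Fintype n] [DecidableEq n]
    {g : Matrix n n ℝ} (hg : g.PosDef) : ∃ B : Matrix n n ℝ, IsUnit B ∧ Bᵀ * B = g := by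
  open scoped MatrixOrder in
  obtain ⟨B, rfl⟩ := CStarAlgebra.nonneg_iff_eq_star_mul_self.mp hg.posSemidef.nonneg
  refine ⟨B, isUnit_of_mul_isUnit_right hg.isUnit, ?_⟩
  rw [star_eq_conjTranspose, conjTranspose_eq_transpose_of_trivial]

end Matrix

open Matrix

/-- The 4-dimensional identity `(G g G)^{μν} = (1/2)(G g) G^{μν} − g^{μν}` for the
effective metric `G = e^{-σ} θ g θᵀ`, `e^σ = √(det θ · det g)`. -/
theorem GgG_identity
    (θ g G : Matrix (Fin 4) (Fin 4) ℝ)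
    (hθ : θᵀ = -θ) (hθu : IsUnit θ) (hg : g.PosDef)
    (hG : G = (Real.sqrt (θ.det * g.det))⁻¹ • (θ * g * θᵀ)) :
    G * g * G = ((G * g).trace / 2) • G - g⁻¹ := by
  obtain ⟨B, hB, hgB⟩ := exists_isUnit_transpose_mul_self_eq_of_posDef hg
  have hCH := cayley_hamilton_mul_mul_transpose_fin_four hθ hB hgB
  have hdet : 0 < θ.det * g.det :=
    mul_pos (det_pos_of_transpose_eq_neg_fin_four hθ hθu) hg.det_pos
  set s := Real.sqrt (θ.det * g.det)
  have hs : s ^ 2 = θ.det * g.det := Real.sq_sqrt hdet.le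
  have hs0 : s ≠ 0 := (Real.sqrt_pos.mpr hdet).ne'
  subst hG
  simp only [Matrix.smul_mul, Matrix.mul_smul, smul_smul, trace_smul, smul_eq_mul, hCH, smul_sub]
  rw [← hs, show s⁻¹ * (s⁻¹ * s ^ 2) = 1 by field_simp, one_smul]
  congr 2
  ring
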